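/- arXiv:2112.08937 — 3 statements merged into one kernel-verified Lean document; each statement's English description precedes it below -/
import Mathlib

section
/- Let f : D → ℂ with f(0) = 0, f(z) ≠ 0 for z ≠ 0 near 0, be asymptotically homogeneous at 0, i.e., for every ζ ∈ ℂ, lim_{z→0, z∈ℂ*} f(zζ)/f(z) = ζ, with the limit locally uniform in ζ. Then f is conformal by Belinskij at 0: f(w) = A(ρ)(w + o(ρ)) where ρ = |w|, A(ρ) = f(ρ)/ρ, o(ρ)/ρ → 0 as ρ → 0, and A satisfies lim_{ρ→0} A(tρ)/A(ρ) = 1 for every t > 0. -/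
/-!
Both claims are instances of the homogeneity limit `f(zζ)/f(z) → ζ` along a bounded family of
parameters. For `w ≠ 0` write `w = ‖w‖ · (w/‖w‖)`: the unit parameter `w/‖w‖` gives
`f(w)/f(‖w‖) - w/‖w‖ → 0`, which is the first claim divided through by `‖w‖`. For real `ρ > 0`
the constant parameter `t` gives `f(tρ)/f(ρ) → t`, and `A(tρ)/A(ρ) = (f(tρ)/f(ρ))/t`.
-/

open Filter

/-- `A(ρ) = f(ρ)/ρ` for real `ρ`. -/
noncomputable def belA (f : ℂ → ℂ) (ρ : ℝ) : ℂ := f (ρ : ℂ) / (ρ : ℂ)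

open Topology

def IsLocallyUniformlyHomogeneousAtZero (f : ℂ → ℂ) : Prop :=
  ∀ ε > (0 : ℝ), ∀ R > (0 : ℝ), ∃ r > (0 : ℝ),
    ∀ z : ℂ, z ≠ 0 → ‖z‖ < r → ∀ ζ : ℂ, ‖ζ‖ ≤ R → ‖f (z * ζ) / f z - ζ‖ < ε

theorem IsLocallyUniformlyHomogeneousAtZero.tendsto_div_sub {f : ℂ → ℂ}
    (hf : IsLocallyUniformlyHomogeneousAtZero f) {α : Type*} {l : Filter α} {z ζ : α → ℂ}
    (hz : Tendsto z l (𝓝[≠] 0)) {R : ℝ} (hR : 0 < R) (hζ : ∀ᶠ a in l, ‖ζ a‖ ≤ R) :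
    Tendsto (fun a => f (z a * ζ a) / f (z a) - ζ a) l (𝓝 0) := by
  rw [Metric.tendsto_nhds]
  intro ε hε
  obtain ⟨r, hr, H⟩ := hf ε hε R hR
  have hz_ne : ∀ᶠ a in l, z a ≠ 0 := hz.eventually self_mem_nhdsWithin
  have hz_small : ∀ᶠ a in l, ‖z a‖ < r :=
    (tendsto_nhdsWithin_iff.mp hz).1.norm.eventually_lt_const (by simpa using hr)
  filter_upwards [hz_ne, hz_small, hζ] with a ha_ne ha_small ha_bdd
  simpa using H (z a) ha_ne ha_small (ζ a) ha_bdd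

theorem tendsto_norm_nhdsNE_zero_complex :
    Tendsto (fun w : ℂ => ((‖w‖ : ℝ) : ℂ)) (𝓝[≠] 0) (𝓝[≠] 0) := by
  refine tendsto_nhdsWithin_iff.mpr ⟨?_, ?_⟩
  · have : Continuous (fun w : ℂ => ((‖w‖ : ℝ) : ℂ)) := by fun_prop
    simpa using (this.tendsto 0).mono_left nhdsWithin_le_nhds
  · filter_upwards [self_mem_nhdsWithin] with w hw
    simpa using hw

theorem tendsto_ofReal_nhdsGT_zero :
    Tendsto (fun ρ : ℝ => (ρ : ℂ)) (𝓝[>] 0) (𝓝[≠] 0) := by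
  refine tendsto_nhdsWithin_iff.mpr ⟨?_, ?_⟩
  · simpa using (Complex.continuous_ofReal.tendsto 0).mono_left nhdsWithin_le_nhds
  · filter_upwards [self_mem_nhdsWithin] with ρ (hρ : 0 < ρ)
    simpa using hρ.ne'

theorem IsLocallyUniformlyHomogeneousAtZero.tendsto_div_belA_sub {f : ℂ → ℂ}
    (hf : IsLocallyUniformlyHomogeneousAtZero f) :
    Tendsto (fun w : ℂ => (f w / belA f ‖w‖ - w) / ((‖w‖ : ℝ) : ℂ)) (𝓝[≠] 0) (𝓝 0) := by
  have hunit : ∀ᶠ w : ℂ in 𝓝[≠] 0, ‖w / ((‖w‖ : ℝ) : ℂ)‖ ≤ 1 :=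
    Eventually.of_forall fun w => by simp [div_self_le_one]
  refine (hf.tendsto_div_sub tendsto_norm_nhdsNE_zero_complex one_pos hunit).congr' ?_
  filter_upwards [self_mem_nhdsWithin] with w (hw : w ≠ 0)
  have hn : ((‖w‖ : ℝ) : ℂ) ≠ 0 := by simpa using hw
  rw [mul_div_cancel₀ _ hn, belA]
  rcases eq_or_ne (f ((‖w‖ : ℝ) : ℂ)) 0 with h | h
  · simp [h, neg_div]
  · field_simp

theorem IsLocallyUniformlyHomogeneousAtZero.tendsto_belA_mul_div_belA {f : ℂ → ℂ}
    (hf : IsLocallyUniformlyHomogeneousAtZero f) {t : ℝ} (ht : 0 < t) :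
    Tendsto (fun ρ : ℝ => belA f (t * ρ) / belA f ρ) (𝓝[>] 0) (𝓝 1) := by
  have hbdd : ∀ᶠ _ρ : ℝ in 𝓝[>] 0, ‖(t : ℂ)‖ ≤ t :=
    Eventually.of_forall fun _ => by simp [abs_of_pos ht]
  have hratio : Tendsto (fun ρ : ℝ => f (ρ * t) / f ρ) (𝓝[>] 0) (𝓝 (t : ℂ)) :=
    tendsto_sub_nhds_zero_iff.mp (hf.tendsto_div_sub tendsto_ofReal_nhdsGT_zero ht hbdd)
  have ht0 : (t : ℂ) ≠ 0 := by exact_mod_cast ht.ne'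
  refine (div_self ht0 ▸ hratio.div_const (t : ℂ)).congr' ?_
  filter_upwards [self_mem_nhdsWithin] with ρ (hρ : 0 < ρ)
  have hρ0 : (ρ : ℂ) ≠ 0 := by exact_mod_cast hρ.ne'
  rw [belA, belA, Complex.ofReal_mul, mul_comm (t : ℂ)]
  rcases eq_or_ne (f ρ) 0 with h | h
  · simp [h]
  · field_simp

theorem belinskij_conformality_of_asymptotic_homogeneity_general
    (f : ℂ → ℂ)
    (hhom : ∀ ε > (0 : ℝ), ∀ R > (0 : ℝ), ∃ r > (0 : ℝ),
      ∀ z : ℂ, z ≠ 0 → ‖z‖ < r → ∀ ζ : ℂ, ‖ζ‖ ≤ R →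
        ‖f (z * ζ) / f z - ζ‖ < ε) :
    Tendsto (fun w : ℂ =>
        (f w / belA f ‖w‖ - w) / ((‖w‖ : ℝ) : ℂ))
      (nhdsWithin (0 : ℂ) {0}ᶜ) (nhds 0)
    ∧ ∀ t > (0 : ℝ),
        Tendsto (fun ρ : ℝ => belA f (t * ρ) / belA f ρ)
          (nhdsWithin 0 (Set.Ioi 0)) (nhds 1) :=
  ⟨IsLocallyUniformlyHomogeneousAtZero.tendsto_div_belA_sub hhom,
    fun _ ht => IsLocallyUniformlyHomogeneousAtZero.tendsto_belA_mul_div_belA hhom ht⟩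

/-- Asymptotic homogeneity at the origin, locally uniform in the parameter,
implies conformality by Belinskij at the origin:
`f(w) = A(|w|)(w + o(|w|))` with `A(ρ) = f(ρ)/ρ` and `A(tρ)/A(ρ) → 1`. -/
theorem belinskij_conformality_of_asymptotic_homogeneity
    (D : Set ℂ) (hD : IsOpen D) (h0 : (0 : ℂ) ∈ D)
    (f : ℂ → ℂ) (hf0 : f 0 = 0)
    (hne : ∀ᶠ z in nhdsWithin (0 : ℂ) {0}ᶜ, f z ≠ 0)
    (hhom : ∀ ε > (0 : ℝ), ∀ R > (0 : ℝ), ∃ r > (0 : ℝ),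
      ∀ z : ℂ, z ≠ 0 → ‖z‖ < r → ∀ ζ : ℂ, ‖ζ‖ ≤ R →
        ‖f (z * ζ) / f z - ζ‖ < ε) :
    Tendsto (fun w : ℂ =>
        (f w / belA f ‖w‖ - w) / ((‖w‖ : ℝ) : ℂ))
      (nhdsWithin (0 : ℂ) {0}ᶜ) (nhds 0)
    ∧ ∀ t > (0 : ℝ),
        Tendsto (fun ρ : ℝ => belA f (t * ρ) / belA f ρ)
          (nhdsWithin 0 (Set.Ioi 0)) (nhds 1) :=
  belinskij_conformality_of_asymptotic_homogeneity_general f hhom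
end

section
/- Let f : D → ℂ be a homeomorphism onto its image with f(0) = 0 ∈ D satisfying: for all δ > 0, f(z')/f(z) - z'/z → 0 as z → 0 along z ∈ ℂ*, |z'| ≤ δ|z|. Then lim_{r→0} (max_{|z|=r} |f(z)|)/(min_{|z|=r} |f(z)|) = 1 (conformality by Lavrent'iev at the origin). -/
/-!
Taking `δ = 1` in the hypothesis compares `f` at any two points `z, z'` of a small circle
`‖z‖ = ‖z'‖ = r`: since `‖z' / z‖ = 1`, we get `‖f z'‖ ≤ (1 + ε) ‖f z‖`. Taking `z' = z`
shows that `f` does not vanish there, because `f z / f z = 0` when `f z = 0`. Hence the ratio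
of the supremum to the infimum of `‖f‖` on the circle lies in `[1, 1 + ε]` for all small `r`.
-/

open Filter Topology Set

theorem Real.tendsto_nhds_of_eventually_mem_Icc {β : Type*} {l : Filter β} {u : β → ℝ}
    {a : ℝ} (h : ∀ ε > 0, ∀ᶠ x in l, u x ∈ Icc a (a + ε)) : Tendsto u l (𝓝 a) := by
  refine Metric.tendsto_nhds.2 fun ε hε => ?_
  filter_upwards [h (ε / 2) (half_pos hε)] with x ⟨hax, hxa⟩
  rw [Real.dist_eq, abs_lt]
  constructor <;> linarith

theorem sSup_div_sInf_image_mem_Icc {α : Type*} {s : Set α} {g : α → ℝ} {c : ℝ}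
    (hs : s.Nonempty) (hpos : ∀ z ∈ s, 0 < g z)
    (hle : ∀ z ∈ s, ∀ z' ∈ s, g z' ≤ c * g z) :
    sSup (g '' s) / sInf (g '' s) ∈ Icc 1 c := by
  obtain ⟨z₀, hz₀⟩ := hs
  have hc : 0 < c :=
    pos_of_mul_pos_left ((hpos z₀ hz₀).trans_le (hle z₀ hz₀ z₀ hz₀)) (hpos z₀ hz₀).le
  have hne : (g '' s).Nonempty := ⟨_, mem_image_of_mem g hz₀⟩
  have hbdd : BddAbove (g '' s) := ⟨c * g z₀, forall_mem_image.2 (hle z₀ hz₀)⟩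
  have hbddb : BddBelow (g '' s) := ⟨0, forall_mem_image.2 fun z hz => (hpos z hz).le⟩
  have hsup_le : sSup (g '' s) / c ≤ sInf (g '' s) :=
    le_csInf hne <| forall_mem_image.2 fun z hz =>
      (div_le_iff₀' hc).2 <| csSup_le hne <|
        forall_mem_image.2 fun z' hz' => hle z hz z' hz'
  have hinf_pos : 0 < sInf (g '' s) :=
    (div_pos (hpos z₀ hz₀) hc).trans_le <|
      (div_le_div_of_nonneg_right (le_csSup hbdd (mem_image_of_mem g hz₀)) hc.le).trans hsup_le
  refine ⟨(one_le_div hinf_pos).2 (csInf_le_csSup hne hbddb hbdd), ?_⟩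
  exact (div_le_iff₀ hinf_pos).2 ((div_le_iff₀' hc).1 hsup_le)

theorem ne_zero_of_norm_div_self_sub_one_lt_one {𝕜 : Type*} [NormedDivisionRing 𝕜] {w : 𝕜}
    (h : ‖w / w - 1‖ < 1) : w ≠ 0 := by
  rintro rfl
  simp at h

theorem norm_le_one_add_mul_norm_of_norm_div_sub_div_lt {𝕜 : Type*} [NormedField 𝕜]
    {w w' z z' : 𝕜} {ε : ℝ} (hw : w ≠ 0) (hz : ‖z'‖ = ‖z‖) (hz₀ : z ≠ 0)
    (h : ‖w' / w - z' / z‖ < ε) : ‖w'‖ ≤ (1 + ε) * ‖w‖ := by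
  have hquot : ‖z' / z‖ = 1 := by rw [norm_div, hz, div_self (norm_ne_zero_iff.2 hz₀)]
  have : ‖w' / w‖ ≤ 1 + ε :=
    calc ‖w' / w‖ ≤ ‖z' / z‖ + ‖w' / w - z' / z‖ := norm_le_insert' _ _
      _ ≤ 1 + ε := by rw [hquot]; exact add_le_add_right h.le 1
  rwa [norm_div, div_le_iff₀ (norm_pos_iff.2 hw)] at this

theorem lavrentiev_conformality_general
    (f : ℂ → ℂ)
    (h3 : ∀ δ > (0 : ℝ), ∀ ε > (0 : ℝ), ∃ r > (0 : ℝ),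
      ∀ z z' : ℂ, z ≠ 0 → ‖z‖ < r → ‖z'‖ ≤ δ * ‖z‖ →
        ‖f z' / f z - z' / z‖ < ε) :
    Tendsto (fun r : ℝ =>
        sSup ((fun z => ‖f z‖) '' Metric.sphere (0 : ℂ) r) /
          sInf ((fun z => ‖f z‖) '' Metric.sphere (0 : ℂ) r))
      (nhdsWithin 0 (Set.Ioi 0)) (nhds 1) := by
  refine Real.tendsto_nhds_of_eventually_mem_Icc fun ε hε => ?_
  obtain ⟨r₁, hr₁, hnonzero⟩ := h3 1 one_pos 1 one_pos
  obtain ⟨r₂, hr₂, hclose⟩ := h3 1 one_pos ε hε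
  filter_upwards [Ioo_mem_nhdsGT (lt_min hr₁ hr₂)] with r ⟨hr, hrr⟩
  obtain ⟨hrr₁, hrr₂⟩ := lt_min_iff.1 hrr
  have hsphere : ∀ z ∈ Metric.sphere (0 : ℂ) r, ‖z‖ = r ∧ z ≠ 0 := fun z hz =>
    have hzr : ‖z‖ = r := mem_sphere_zero_iff_norm.1 hz
    ⟨hzr, norm_pos_iff.1 (hzr ▸ hr)⟩
  have hfz : ∀ z ∈ Metric.sphere (0 : ℂ) r, f z ≠ 0 := fun z hz => by
    obtain ⟨hzr, hz₀⟩ := hsphere z hz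
    have := hnonzero z z hz₀ (hzr ▸ hrr₁) (one_mul _).ge
    rw [div_self hz₀] at this
    exact ne_zero_of_norm_div_self_sub_one_lt_one this
  refine sSup_div_sInf_image_mem_Icc (NormedSpace.sphere_nonempty.2 hr.le)
    (fun z hz => norm_pos_iff.2 (hfz z hz)) fun z hz z' hz' => ?_
  obtain ⟨hzr, hz₀⟩ := hsphere z hz
  have hz'z : ‖z'‖ = ‖z‖ := (hsphere z' hz').1.trans hzr.symm
  exact norm_le_one_add_mul_norm_of_norm_div_sub_div_lt (hfz z hz) hz'z hz₀
    (hclose z z' hz₀ (hzr ▸ hrr₂) (by rw [hz'z, one_mul]))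

theorem lavrentiev_conformality
    (D : Set ℂ) (hD : IsOpen D) (h0 : (0 : ℂ) ∈ D)
    (f : ℂ → ℂ) (hf0 : f 0 = 0)
    (hcont : ContinuousOn f D) (hinj : Set.InjOn f D)
    (h3 : ∀ δ > (0 : ℝ), ∀ ε > (0 : ℝ), ∃ r > (0 : ℝ),
      ∀ z z' : ℂ, z ≠ 0 → ‖z‖ < r → ‖z'‖ ≤ δ * ‖z‖ →
        ‖f z' / f z - z' / z‖ < ε) :
    Tendsto (fun r : ℝ =>
        sSup ((fun z => ‖f z‖) '' Metric.sphere (0 : ℂ) r) /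
          sInf ((fun z => ‖f z‖) '' Metric.sphere (0 : ℂ) r))
      (nhdsWithin 0 (Set.Ioi 0)) (nhds 1) :=
  lavrentiev_conformality_general f h3
end

section
/- Let f : D → ℂ, f(0)=0, be injective continuous near 0 and satisfy: for all δ > 0, lim_{z→0}( |f(z')|/|f(z)| - |z'|/|z| ) = 0 along z ∈ ℂ*, |z'| ≤ δ|z|. Then lim_{z→0, z∈ℂ*} ln|f(z)| / ln|z| = 1. -/
/-! Put `D z = log ‖f z‖ - log ‖z‖`. When `‖z'‖ / ‖z‖ ∈ [1/2, 1]`, the hypothesis makes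
`‖f z'‖ / ‖f z‖` multiplicatively `(1 ± 2a)`-close to `‖z'‖ / ‖z‖`, so `D` moves by at most `4a`
across one dyadic step. Chaining the `≈ log₂ (r / ‖w‖)` dyadic steps from a fixed point of norm
`r / 2` down to `w` gives `|D w| ≤ (4a / log 2) |log ‖w‖| + C`. Since `a` is arbitrary and
`|log ‖w‖| → ∞`, this says `D = o(log ‖·‖)`, i.e. `log ‖f w‖ ~ log ‖w‖`. -/

open Filter Topology Asymptotics Real

lemma abs_log_le_two_mul_abs_sub_one {t : ℝ} (ht : |t - 1| ≤ 1 / 2) :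
    |log t| ≤ 2 * |t - 1| := by
  have ht0 : 1 / 2 ≤ t := by linarith [neg_abs_le (t - 1)]
  rw [abs_le]
  constructor
  · have h := one_sub_inv_le_log_of_pos (by linarith : 0 < t)
    have : 1 - t⁻¹ = (t - 1) / t := by field_simp
    rw [this] at h
    have : -(2 * |t - 1|) ≤ (t - 1) / t := by
      rw [le_div_iff₀ (by linarith)]
      nlinarith [neg_abs_le (t - 1), abs_nonneg (t - 1)]
    linarith
  · linarith [log_le_sub_one_of_pos (by linarith : 0 < t), le_abs_self (t - 1), abs_nonneg (t - 1)]

lemma abs_sub_le_mul_one_add_logb_of_dyadic {E : Type*} [NormedAddCommGroup E] [NormedSpace ℝ E]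
    {D : E → ℝ} {r η : ℝ}
    (hD : ∀ z z' : E, z ≠ 0 → ‖z‖ < r → ‖z‖ ≤ 2 * ‖z'‖ → ‖z'‖ ≤ ‖z‖ → |D z' - D z| ≤ η)
    {z₀ w : E} (hw : w ≠ 0) (hwz : ‖w‖ ≤ ‖z₀‖) (hz₀ : ‖z₀‖ < r) :
    |D w - D z₀| ≤ η * (1 + logb 2 (‖z₀‖ / ‖w‖)) := by
  suffices ∀ n : ℕ, ∀ w : E, w ≠ 0 → ‖w‖ ≤ ‖z₀‖ → ‖z₀‖ < 2 ^ n * ‖w‖ →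
      |D w - D z₀| ≤ η * (1 + logb 2 (‖z₀‖ / ‖w‖)) by
    obtain ⟨n, hn⟩ := pow_unbounded_of_one_lt (‖z₀‖ / ‖w‖) (one_lt_two (α := ℝ))
    exact this n w hw hwz (by rwa [div_lt_iff₀ (norm_pos_iff.2 hw)] at hn)
  intro n
  induction n with
  | zero =>
    intro w _ hwz hlt
    linarith
  | succ n ih =>
    intro w hw hwz hlt
    have hw' : 0 < ‖w‖ := norm_pos_iff.2 hw
    have hlogb : 0 ≤ logb 2 (‖z₀‖ / ‖w‖) :=
      logb_nonneg one_lt_two (by rwa [le_div_iff₀ hw', one_mul])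
    rcases lt_or_ge ‖z₀‖ (2 * ‖w‖) with hnear | hfar
    · have h := hD z₀ w (norm_pos_iff.1 (hw'.trans_le hwz)) hz₀ hnear.le hwz
      have hη : 0 ≤ η := (abs_nonneg _).trans h
      nlinarith
    · have h2w : ‖(2 : ℝ) • w‖ = 2 * ‖w‖ := by simp [norm_smul]
      have hstep := hD ((2 : ℝ) • w) w (smul_ne_zero two_ne_zero hw) (by linarith)
        (by linarith) (by linarith)
      have hrest := ih ((2 : ℝ) • w) (smul_ne_zero two_ne_zero hw) (by linarith)
        (by rwa [h2w, ← mul_assoc, ← pow_succ])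
      have hsplit : logb 2 (‖z₀‖ / ‖w‖) = logb 2 (‖z₀‖ / ‖(2 : ℝ) • w‖) + 1 := by
        rw [h2w, div_mul_eq_div_div_swap,
          logb_div (div_pos (hw'.trans_le hwz) hw').ne' two_ne_zero, logb_self_eq_one one_lt_two]
        ring
      rw [hsplit]
      calc |D w - D z₀| ≤ |D w - D ((2 : ℝ) • w)| + |D ((2 : ℝ) • w) - D z₀| := abs_sub_le _ _ _
        _ ≤ η + η * (1 + logb 2 (‖z₀‖ / ‖(2 : ℝ) • w‖)) := add_le_add hstep hrest
        _ = η * (1 + (logb 2 (‖z₀‖ / ‖(2 : ℝ) • w‖) + 1)) := by ring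

abbrev NormRatioClose {E F : Type*} [NormedAddCommGroup E] [NormedAddCommGroup F] (f : E → F)
    (r a : ℝ) : Prop :=
  ∀ z z' : E, z ≠ 0 → ‖z‖ < r → ‖z'‖ ≤ ‖z‖ → |‖f z'‖ / ‖f z‖ - ‖z'‖ / ‖z‖| < a

namespace NormRatioClose

variable {E F : Type*} [NormedAddCommGroup E] [NormedAddCommGroup F] {f : E → F} {r a : ℝ}

lemma norm_pos (h : NormRatioClose f r a) (ha : a ≤ 1) {z : E} (hz : z ≠ 0) (hzr : ‖z‖ < r) :
    0 < ‖f z‖ := by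
  -- with `z' = z`, a vanishing `‖f z‖` turns the ratio into the junk value `0 / 0 = 0`
  refine (norm_nonneg _).lt_of_ne fun hfz => ?_
  have h' := h z z hz hzr le_rfl
  rw [← hfz, div_zero, div_self (norm_ne_zero_iff.2 hz)] at h'
  norm_num at h'
  linarith

lemma abs_sub_log_sub_le (h : NormRatioClose f r a) (ha : a ≤ 1 / 4) {z z' : E} (hz : z ≠ 0)
    (hzr : ‖z‖ < r) (hzz' : ‖z‖ ≤ 2 * ‖z'‖) (hz'z : ‖z'‖ ≤ ‖z‖) :
    |(log ‖f z'‖ - log ‖z'‖) - (log ‖f z‖ - log ‖z‖)| ≤ 4 * a := by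
  have hz0 : 0 < ‖z‖ := norm_pos_iff.2 hz
  have hz'0 : 0 < ‖z'‖ := by linarith
  have hfz := h.norm_pos (by linarith) hz hzr
  have hfz' := h.norm_pos (by linarith) (norm_pos_iff.1 hz'0) (hz'z.trans_lt hzr)
  set s := ‖z'‖ / ‖z‖
  have hs : 1 / 2 ≤ s := by rw [le_div_iff₀ hz0]; linarith
  have hs0 : 0 < s := by linarith
  have hclose : |‖f z'‖ / ‖f z‖ / s - 1| ≤ 2 * a := by
    rw [← div_self hs0.ne', ← sub_div, abs_div, abs_of_pos hs0, div_le_iff₀ hs0]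
    nlinarith [h z z' hz hzr hz'z, abs_nonneg (‖f z'‖ / ‖f z‖ - s)]
  have hlog : (log ‖f z'‖ - log ‖z'‖) - (log ‖f z‖ - log ‖z‖) = log (‖f z'‖ / ‖f z‖ / s) := by
    rw [log_div (div_pos hfz' hfz).ne' hs0.ne', log_div hfz'.ne' hfz.ne',
      log_div hz'0.ne' hz0.ne']
    ring
  rw [hlog]
  linarith [abs_log_le_two_mul_abs_sub_one (hclose.trans (by linarith))]

lemma exists_abs_log_sub_log_le [NormedSpace ℝ E] [Nontrivial E] (h : NormRatioClose f r a)
    (ha : a ≤ 1 / 4) (hr : 0 < r) :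
    ∃ C, ∀ᶠ w in 𝓝[≠] (0 : E), |log ‖f w‖ - log ‖w‖| ≤ 4 * a / log 2 * |log ‖w‖| + C := by
  obtain ⟨z₀, hz₀⟩ := exists_norm_eq E (by positivity : 0 ≤ r / 2)
  have hz₀r : ‖z₀‖ < r := by linarith
  have ha0 : 0 ≤ a := (abs_nonneg _).trans
    (h z₀ z₀ (norm_pos_iff.1 (by linarith)) hz₀r le_rfl).le
  have hlog2 : 0 < log 2 := log_pos one_lt_two
  refine ⟨|log ‖f z₀‖ - log ‖z₀‖| + 4 * a * (1 + |log ‖z₀‖| / log 2), ?_⟩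
  filter_upwards [self_mem_nhdsWithin,
    mem_nhdsWithin_of_mem_nhds (Metric.closedBall_mem_nhds (0 : E) (half_pos hr))] with w hw hwz
  rw [mem_closedBall_zero_iff, ← hz₀] at hwz
  have hchain := abs_sub_le_mul_one_add_logb_of_dyadic
    (fun z z' hz hzr hzz' hz'z => h.abs_sub_log_sub_le ha hz hzr hzz' hz'z) hw hwz hz₀r
  have hlogb : logb 2 (‖z₀‖ / ‖w‖) ≤ (|log ‖z₀‖| + |log ‖w‖|) / log 2 := by
    rw [logb, log_div (by linarith) (norm_ne_zero_iff.2 hw)]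
    gcongr
    linarith [le_abs_self (log ‖z₀‖), neg_abs_le (log ‖w‖)]
  calc |log ‖f w‖ - log ‖w‖|
      ≤ |log ‖f z₀‖ - log ‖z₀‖| + 4 * a * (1 + logb 2 (‖z₀‖ / ‖w‖)) := by
        linarith [abs_sub_abs_le_abs_sub (log ‖f w‖ - log ‖w‖) (log ‖f z₀‖ - log ‖z₀‖)]
    _ ≤ |log ‖f z₀‖ - log ‖z₀‖| + 4 * a * (1 + (|log ‖z₀‖| + |log ‖w‖|) / log 2) := by gcongr
    _ = _ := by ring

end NormRatioClose

lemma Asymptotics.isLittleO_of_forall_eventually_le_mul_add {α E F : Type*} [NormedAddCommGroup E]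
    [NormedAddCommGroup F] {l : Filter α} {u : α → E} {v : α → F}
    (hv : Tendsto (fun x => ‖v x‖) l atTop)
    (h : ∀ c > 0, ∃ C, ∀ᶠ x in l, ‖u x‖ ≤ c * ‖v x‖ + C) : u =o[l] v := by
  refine isLittleO_iff.2 fun c hc => ?_
  obtain ⟨C, hC⟩ := h (c / 2) (half_pos hc)
  filter_upwards [hC, hv.eventually_ge_atTop (2 * C / c)] with x hux hvx
  have : C ≤ c / 2 * ‖v x‖ := by
    rw [div_le_iff₀' hc] at hvx
    linarith
  linarith

theorem log_ratio_tendsto_one_general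
    (f : ℂ → ℂ)
    (h6m : ∀ δ > (0 : ℝ), ∀ ε > (0 : ℝ), ∃ r > (0 : ℝ),
      ∀ z z' : ℂ, z ≠ 0 → ‖z‖ < r → ‖z'‖ ≤ δ * ‖z‖ →
        |‖f z'‖ / ‖f z‖
          - ‖z'‖ / ‖z‖| < ε) :
    Tendsto (fun z : ℂ =>
        Real.log (‖f z‖) / Real.log (‖z‖))
      (nhdsWithin (0 : ℂ) {0}ᶜ) (nhds 1) := by
  have hlog : Tendsto (fun z : ℂ => log ‖z‖) (𝓝[≠] 0) atBot :=
    tendsto_log_nhdsGT_zero.comp tendsto_norm_nhdsNE_zero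
  have hclose : ∀ c > 0, ∃ C, ∀ᶠ z in 𝓝[≠] (0 : ℂ),
      ‖log ‖f z‖ - log ‖z‖‖ ≤ c * ‖log ‖z‖‖ + C := by
    intro c hc
    set a := min (1 / 4) (c * log 2 / 4)
    have ha : 0 < a := lt_min (by norm_num) (by positivity)
    obtain ⟨r, hr, hf⟩ := h6m 1 one_pos a ha
    have hfr : NormRatioClose f r a := fun z z' hz hzr hz'z => hf z z' hz hzr (by rwa [one_mul])
    obtain ⟨C, hC⟩ := hfr.exists_abs_log_sub_log_le (min_le_left _ _) hr
    have hac : 4 * a / log 2 ≤ c := by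
      rw [div_le_iff₀ (log_pos one_lt_two)]
      linarith [min_le_right (1 / 4) (c * log 2 / 4)]
    refine ⟨C, hC.mono fun z hz => ?_⟩
    simp only [Real.norm_eq_abs]
    exact hz.trans (by gcongr)
  refine (isEquivalent_iff_tendsto_one (hlog.eventually_ne_atBot 0)).1 ?_
  exact isLittleO_of_forall_eventually_le_mul_add
    (tendsto_abs_atBot_atTop.comp hlog) hclose

theorem log_ratio_tendsto_one
    (D : Set ℂ) (hD : IsOpen D) (h0 : (0 : ℂ) ∈ D)
    (f : ℂ → ℂ) (hf0 : f 0 = 0)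
    (hcont : ContinuousOn f D) (hinj : Set.InjOn f D)
    (hne : ∀ᶠ z in nhdsWithin (0 : ℂ) {0}ᶜ, f z ≠ 0)
    (hlim : Tendsto f (nhdsWithin (0 : ℂ) {0}ᶜ) (nhds 0))
    (h6m : ∀ δ > (0 : ℝ), ∀ ε > (0 : ℝ), ∃ r > (0 : ℝ),
      ∀ z z' : ℂ, z ≠ 0 → ‖z‖ < r → ‖z'‖ ≤ δ * ‖z‖ →
        |‖f z'‖ / ‖f z‖
          - ‖z'‖ / ‖z‖| < ε) :
    Tendsto (fun z : ℂ =>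
        Real.log (‖f z‖) / Real.log (‖z‖))
      (nhdsWithin (0 : ℂ) {0}ᶜ) (nhds 1) :=
  log_ratio_tendsto_one_general f h6m
end
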